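/- For fixed probability vectors p and π with strictly positive entries, the density power divergence d_β(p, π) = ∑ⱼ (πⱼ^{1+β} - (1 + 1/β) pⱼ πⱼ^β + (1/β) pⱼ^{β+1}) converges, as β → 0⁺, to the Kullback–Leibler divergence ∑ⱼ pⱼ log(pⱼ/πⱼ). -/
import Mathlib

open Finset Filter

/-- As `β → 0⁺`, the density power divergence `d_β(p, π)` converges to the
Kullback–Leibler divergence `∑ⱼ pⱼ log(pⱼ/πⱼ)`. -/
theorem dpd_tendsto_kl (m : ℕ)
    (p π : Fin m → ℝ) (hp : ∀ j, 0 < p j) (hπ : ∀ j, 0 < π j)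
    (hps : ∑ j, p j = 1) (hπs : ∑ j, π j = 1) :
    Tendsto
      (fun β : ℝ =>
        ∑ j, ((π j) ^ (1 + β) - (1 + 1 / β) * p j * (π j) ^ β + (1 / β) * (p j) ^ (β + 1)))
      (nhdsWithin 0 (Set.Ioi 0))
      (nhds (∑ j, p j * Real.log (p j / π j))) := by
  have key : ∀ j : Fin m, Tendsto (fun β : ℝ =>
      (π j) ^ (1 + β) - (1 + 1 / β) * p j * (π j) ^ β + (1 / β) * (p j) ^ (β + 1))
      (nhdsWithin 0 (Set.Ioi 0))
      (nhds (π j - p j + p j * Real.log (p j / π j))) := by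
    intro j
    have ha := hp j; have hb := hπ j
    set a := p j with hadef; set b := π j with hbdef
    -- derivative of β ↦ a^β - b^β at 0 is log a - log b
    have hda : HasDerivAt (fun β : ℝ => a ^ β) (Real.log a) 0 := by
      have h1 : HasDerivAt (fun β : ℝ => Real.exp (β * Real.log a))
          (Real.exp (0 * Real.log a) * (1 * Real.log a)) 0 :=
        (Real.hasDerivAt_exp _).comp 0 ((hasDerivAt_id (0:ℝ)).mul_const _)
      simpa [Real.rpow_def_of_pos ha, mul_comm] using h1
    have hdb : HasDerivAt (fun β : ℝ => b ^ β) (Real.log b) 0 := by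
      have h1 : HasDerivAt (fun β : ℝ => Real.exp (β * Real.log b))
          (Real.exp (0 * Real.log b) * (1 * Real.log b)) 0 :=
        (Real.hasDerivAt_exp _).comp 0 ((hasDerivAt_id (0:ℝ)).mul_const _)
      simpa [Real.rpow_def_of_pos hb, mul_comm] using h1
    have hd : HasDerivAt (fun β : ℝ => a ^ β - b ^ β) (Real.log a - Real.log b) 0 :=
      hda.sub hdb
    have hslope : Tendsto (fun β : ℝ => (a ^ β - b ^ β) / β) (nhdsWithin 0 (Set.Ioi 0))
        (nhds (Real.log a - Real.log b)) := by
      have h := hasDerivAt_iff_tendsto_slope.mp hd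
      have h2 : Tendsto (slope (fun β : ℝ => a ^ β - b ^ β) 0)
          (nhdsWithin 0 (Set.Ioi 0)) (nhds (Real.log a - Real.log b)) :=
        h.mono_left (nhdsWithin_mono _ (fun x hx => ne_of_gt hx))
      refine h2.congr (fun x => ?_)
      simp [slope_def_field, Real.rpow_zero]
    -- continuous parts
    have hc1 : Tendsto (fun β : ℝ => b ^ (1 + β)) (nhdsWithin 0 (Set.Ioi 0)) (nhds b) := by
      have : ContinuousAt (fun β : ℝ => b ^ (1 + β)) 0 :=
        (Real.continuousAt_const_rpow (ne_of_gt hb)).comp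
          (continuous_const.add continuous_id).continuousAt
      simpa using this.continuousWithinAt.tendsto
    have hc2 : Tendsto (fun β : ℝ => a * b ^ β) (nhdsWithin 0 (Set.Ioi 0)) (nhds a) := by
      have : ContinuousAt (fun β : ℝ => a * b ^ β) 0 :=
        continuousAt_const.mul (Real.continuousAt_const_rpow (ne_of_gt hb))
      simpa using this.continuousWithinAt.tendsto
    have hcomb : Tendsto (fun β : ℝ =>
        b ^ (1 + β) - a * b ^ β + a * ((a ^ β - b ^ β) / β))
        (nhdsWithin 0 (Set.Ioi 0))
        (nhds (b - a + a * (Real.log a - Real.log b))) :=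
      (hc1.sub hc2).add (hslope.const_mul a)
    have hlog : Real.log a - Real.log b = Real.log (a / b) :=
      (Real.log_div (ne_of_gt ha) (ne_of_gt hb)).symm
    rw [hlog] at hcomb
    refine hcomb.congr' ?_
    filter_upwards [self_mem_nhdsWithin] with β hβ
    have hβ0 : β ≠ 0 := ne_of_gt hβ
    have hab : a ^ (β + 1) = a ^ β * a := by
      rw [Real.rpow_add ha, Real.rpow_one]
    rw [hab]
    field_simp
    ring
  have total := tendsto_finset_sum Finset.univ (fun j _ => key j)
  have hsum : ∑ j, (π j - p j + p j * Real.log (p j / π j))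
      = ∑ j, p j * Real.log (p j / π j) := by
    rw [Finset.sum_add_distrib, Finset.sum_sub_distrib, hps, hπs]
    ring
  rw [hsum] at total
  exact total
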